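/- Let A be a unital C*-algebra and H a complex Hilbert space. Then the set of C*-extreme points of the C*-convex set CCP^×(A,B(H)) of contractive CP maps Φ : A → B(H) with Φ(1) invertible equals the set of C*-extreme points of UCP(A,B(H)). -/

import Mathlib

open scoped ComplexOrder

noncomputable section

section Defs

variable {A H : Type*}
variable [NormedAddCommGroup H] [InnerProductSpace ℂ H]

/-- An operator on a complex inner product space is positive:
`0 ≤ ⟪x, T x⟫` for all `x`. -/
def IsPosOp (T : H →L[ℂ] H) : Prop := ∀ x : H, 0 ≤ (inner ℂ x (T x) : ℂ)

variable [Ring A] [StarRing A] [Algebra ℂ A]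

/-- Complete positivity of a linear map `Φ : A → B(H)`:
`∑_{i,j} ⟪h i, Φ(a i* a j) (h j)⟫ ≥ 0` for all finite families. -/
def IsCPMap (Φ : A →ₗ[ℂ] (H →L[ℂ] H)) : Prop :=
  ∀ (n : ℕ) (a : Fin n → A) (h : Fin n → H),
    0 ≤ ∑ i, ∑ j, (inner ℂ (h i) ((Φ (star (a i) * a j)) (h j)) : ℂ)

/-- `CP^{(P)}(A, B(H))`: the CP maps `Φ` with `Φ 1 = P`. -/
def CPP (P : H →L[ℂ] H) : Set (A →ₗ[ℂ] (H →L[ℂ] H)) := {Φ | IsCPMap Φ ∧ Φ 1 = P}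

/-- `CCP(A, B(H))`: the contractive CP maps, i.e. CP maps with `Φ 1 ≤ 1`. -/
def CCPmaps : Set (A →ₗ[ℂ] (H →L[ℂ] H)) := {Φ | IsCPMap Φ ∧ IsPosOp (1 - Φ 1)}

variable [CompleteSpace H]

/-- `Ad_T : X ↦ T* X T`, as a linear map on `B(H)`. -/
def conjAd (T : H →L[ℂ] H) : (H →L[ℂ] H) →ₗ[ℂ] (H →L[ℂ] H) where
  toFun X := star T * X * T
  map_add' X Y := by simp [add_mul, mul_add]
  map_smul' c X := by simp [mul_smul_comm, smul_mul_assoc]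

/-- `Φ ∈ CP^{(P)}` is a `P`-`C*`-extreme point of `CP^{(P)}(A, B(H))`:
whenever `Φ = ∑ Ad_{T j} ∘ Φs j` is a proper `P`-`C*`-convex combination of members of
`CP^{(P)}`, each `Φs j` equals `Ad_{S j} ∘ Φ` for some invertible `S j`. -/
def IsPCExtreme (P : H →L[ℂ] H) (Φ : A →ₗ[ℂ] (H →L[ℂ] H)) : Prop :=
  Φ ∈ CPP (A := A) P ∧
  ∀ (n : ℕ) (T : Fin n → (H →L[ℂ] H)) (Φs : Fin n → (A →ₗ[ℂ] (H →L[ℂ] H))),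
    (∀ j, IsUnit (T j)) → (∀ j, Φs j ∈ CPP (A := A) P) →
    (∑ j, star (T j) * P * T j) = P →
    Φ = ∑ j, (conjAd (T j)).comp (Φs j) →
    ∀ j, ∃ S : H →L[ℂ] H, IsUnit S ∧ Φs j = (conjAd S).comp Φ

/-- `Φ ∈ C` is a `C*`-extreme point of the `C*`-convex set `C`:
whenever `Φ = ∑ Ad_{T j} ∘ Φs j` is a proper `C*`-convex combination of members of `C`,
each `Φs j` is unitarily equivalent to `Φ`. -/
def IsCstarExtreme (C : Set (A →ₗ[ℂ] (H →L[ℂ] H))) (Φ : A →ₗ[ℂ] (H →L[ℂ] H)) : Prop :=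
  Φ ∈ C ∧
  ∀ (n : ℕ) (T : Fin n → (H →L[ℂ] H)) (Φs : Fin n → (A →ₗ[ℂ] (H →L[ℂ] H))),
    (∀ j, IsUnit (T j)) → (∀ j, Φs j ∈ C) →
    (∑ j, star (T j) * T j) = 1 →
    Φ = ∑ j, (conjAd (T j)).comp (Φs j) →
    ∀ j, ∃ U : H →L[ℂ] H, U ∈ unitary (H →L[ℂ] H) ∧ Φs j = (conjAd U).comp Φ

/-- `Φ ∈ C` is a linear extreme point of the convex set `C`. -/
def IsLinExtreme (C : Set (A →ₗ[ℂ] (H →L[ℂ] H))) (Φ : A →ₗ[ℂ] (H →L[ℂ] H)) : Prop :=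
  Φ ∈ C ∧
  ∀ (n : ℕ) (t : Fin n → ℝ) (Φs : Fin n → (A →ₗ[ℂ] (H →L[ℂ] H))),
    (∀ j, 0 < t j ∧ t j < 1) → (∀ j, Φs j ∈ C) → (∑ j, t j) = 1 →
    Φ = ∑ j, (t j : ℂ) • Φs j →
    ∀ j, Φs j = Φ

end Defs

/-! A `C*`-extreme point `Φ` of `CCP^×` is automatically unital. With `Ψ = Φ / 2`, both `Q = Ψ 1`
and `1 - Q = (1 - Φ 1) + Q` are strictly positive, so `Q = s* s` and `1 - Q = r* r` for invertible
`s`, `r`, and `Φ = Ad_s (Ad_{s⁻¹} Ψ) + Ad_r (Ad_{r⁻¹} Ψ)` is a proper `C*`-convex combination of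
members of `CCP^×` whose first component is unital. Extremality makes that component unitarily equivalent
to `Φ`, which forces `Φ 1 = 1`. Conversely, if `Φ` is unital and `Φ = ∑ Ad_{T j} (Φs j)` with
`Φs j ∈ CCP^×`, then `∑ (T j)* (1 - Φs j 1) (T j) = 0` is a sum of positive operators, so every
`Φs j` is unital. Thus both extremality conditions quantify over the same decompositions. -/

section StarOrderedRing

variable {B : Type*} [Ring B] [StarRing B] [PartialOrder B] [StarOrderedRing B]

theorem eq_one_of_sum_star_mul_mul_eq {ι : Type*} [Fintype ι] {T X : ι → B}
    (hT : ∀ i, IsUnit (T i)) (hX : ∀ i, X i ≤ 1)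
    (h : ∑ i, star (T i) * X i * T i = ∑ i, star (T i) * T i) (i : ι) : X i = 1 := by
  have hsum : ∑ i, star (T i) * (1 - X i) * T i = 0 := by
    simp only [mul_sub, sub_mul, mul_one, Finset.sum_sub_distrib, h, sub_self]
  rw [Finset.sum_eq_zero_iff_of_nonneg fun i _ ↦
    star_left_conjugate_nonneg (sub_nonneg.2 (hX i)) (T i)] at hsum
  have hi := hsum i (Finset.mem_univ i)
  rwa [(hT i).mul_left_eq_zero, (hT i).star.mul_right_eq_zero, sub_eq_zero, eq_comm] at hi

end StarOrderedRing

theorem exists_units_star_mul_self_eq {B : Type*} [CStarAlgebra B] [PartialOrder B]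
    [StarOrderedRing B] {a : B} (ha : IsStrictlyPositive a) : ∃ u : Bˣ, star (u : B) * u = a :=
  ⟨ha.isUnit_cfcSqrt.unit, by
    simp [(CFC.sqrt_nonneg a).isSelfAdjoint.star_eq, CFC.sqrt_mul_sqrt_self a ha.nonneg]⟩

section Operators

variable {H : Type*} [NormedAddCommGroup H] [InnerProductSpace ℂ H]

theorem isPosOp_iff_nonneg {T : H →L[ℂ] H} : IsPosOp T ↔ 0 ≤ T := by
  have hconj (z : ℂ) : 0 ≤ (starRingEnd ℂ) z ↔ 0 ≤ z := by simp [Complex.nonneg_iff, eq_comm]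
  rw [ContinuousLinearMap.nonneg_iff_isPositive, ContinuousLinearMap.isPositive_iff_complex]
  refine forall_congr' fun x ↦ ?_
  rw [← inner_conj_symm, hconj, Complex.nonneg_iff, Complex.ext_iff]
  simp [and_comm]

variable [CompleteSpace H]

theorem conjAd_apply (T X : H →L[ℂ] H) : conjAd T X = star T * X * T := rfl

theorem conjAd_conjAd (S T X : H →L[ℂ] H) : conjAd S (conjAd T X) = conjAd (T * S) X := by
  simp only [conjAd_apply, star_mul, mul_assoc]

theorem conjAd_one_apply (X : H →L[ℂ] H) : conjAd 1 X = X := by simp [conjAd_apply]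

theorem conjAd_units_comp_conjAd_inv_comp {M : Type*} [AddCommMonoid M] [Module ℂ M]
    (u : (H →L[ℂ] H)ˣ) (Ψ : M →ₗ[ℂ] (H →L[ℂ] H)) :
    (conjAd (u : H →L[ℂ] H)).comp ((conjAd (H := H) ↑u⁻¹).comp Ψ) = Ψ := by
  ext1 a
  rw [LinearMap.comp_apply, LinearMap.comp_apply, conjAd_conjAd, Units.inv_mul, conjAd_one_apply]

theorem conjAd_units_inv_star_mul_self (u : (H →L[ℂ] H)ˣ) :
    conjAd (H := H) ↑u⁻¹ (star (u : H →L[ℂ] H) * u) = 1 := by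
  rw [← mul_one (star (u : H →L[ℂ] H)), ← conjAd_apply, conjAd_conjAd, Units.mul_inv,
    conjAd_one_apply]

theorem eq_one_of_conjAd_eq_one {U X : H →L[ℂ] H} (hU : U ∈ unitary (H →L[ℂ] H))
    (h : conjAd U X = 1) : X = 1 := by
  have hX : conjAd (star U) (conjAd U X) = X := by
    rw [conjAd_conjAd, Unitary.mul_star_self_of_mem hU, conjAd_one_apply]
  rw [← hX, h, conjAd_apply, star_star, mul_one, Unitary.mul_star_self_of_mem hU]

end Operators

section CompletelyPositive

variable {A H : Type*} [Ring A] [StarRing A] [Algebra ℂ A]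
  [NormedAddCommGroup H] [InnerProductSpace ℂ H]

theorem IsCPMap.isPosOp_map_star_mul_self {Φ : A →ₗ[ℂ] (H →L[ℂ] H)} (hΦ : IsCPMap Φ) (a : A) :
    IsPosOp (Φ (star a * a)) := fun x ↦ by
  simpa using hΦ 1 (fun _ ↦ a) (fun _ ↦ x)

theorem IsCPMap.smul {Φ : A →ₗ[ℂ] (H →L[ℂ] H)} (hΦ : IsCPMap Φ) {c : ℝ} (hc : 0 ≤ c) :
    IsCPMap (c • Φ) := fun n a h ↦ by
  simpa [← Complex.coe_smul, inner_smul_real_right, ← Finset.mul_sum]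
    using mul_nonneg (by exact_mod_cast hc) (hΦ n a h)

variable [CompleteSpace H]

theorem IsCPMap.conjAd_comp {Φ : A →ₗ[ℂ] (H →L[ℂ] H)} (hΦ : IsCPMap Φ) (V : H →L[ℂ] H) :
    IsCPMap ((conjAd V).comp Φ) := fun n a h ↦ by
  simpa [conjAd_apply, ContinuousLinearMap.star_eq_adjoint,
    ContinuousLinearMap.adjoint_inner_right] using hΦ n a (fun i ↦ V (h i))

end CompletelyPositive

section CCPInv

variable {A H : Type*} [Ring A] [StarRing A] [Algebra ℂ A]
  [NormedAddCommGroup H] [InnerProductSpace ℂ H] [CompleteSpace H]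

/-- `CCP^×(A, B(H))`. -/
def CCPInvMaps : Set (A →ₗ[ℂ] (H →L[ℂ] H)) := {Ψ | IsCPMap Ψ ∧ IsPosOp (1 - Ψ 1) ∧ IsUnit (Ψ 1)}

theorem mem_CCPInvMaps_iff {Ψ : A →ₗ[ℂ] (H →L[ℂ] H)} :
    Ψ ∈ CCPInvMaps ↔ IsCPMap Ψ ∧ Ψ 1 ≤ 1 ∧ IsUnit (Ψ 1) := by
  rw [CCPInvMaps, Set.mem_ofPred_eq, isPosOp_iff_nonneg, sub_nonneg]

theorem conjAd_inv_comp_mem_CCPInvMaps {Ψ : A →ₗ[ℂ] (H →L[ℂ] H)} (hΨ : IsCPMap Ψ)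
    (hΨ1 : IsUnit (Ψ 1)) (u : (H →L[ℂ] H)ˣ) (hle : Ψ 1 ≤ star (u : H →L[ℂ] H) * u) :
    (conjAd (H := H) ↑u⁻¹).comp Ψ ∈ CCPInvMaps := by
  refine mem_CCPInvMaps_iff.2 ⟨hΨ.conjAd_comp _, ?_, ?_⟩
  · rw [LinearMap.comp_apply, ← conjAd_units_inv_star_mul_self u, conjAd_apply, conjAd_apply]
    exact star_left_conjugate_le_conjugate hle _
  · exact (u⁻¹.isUnit.star.mul hΨ1).mul u⁻¹.isUnit

theorem CPP_one_subset_CCPInvMaps : CPP (A := A) (1 : H →L[ℂ] H) ⊆ CCPInvMaps :=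
  fun _ ⟨hCP, hΨ1⟩ ↦ mem_CCPInvMaps_iff.2 ⟨hCP, hΨ1.le, hΨ1 ▸ isUnit_one⟩

theorem map_one_eq_one_of_eq_sum_conjAd_comp {n : ℕ} {Φ : A →ₗ[ℂ] (H →L[ℂ] H)}
    {T : Fin n → (H →L[ℂ] H)} {Φs : Fin n → (A →ₗ[ℂ] (H →L[ℂ] H))}
    (hT : ∀ j, IsUnit (T j)) (hΦs : ∀ j, Φs j ∈ CCPInvMaps) (hsum : ∑ j, star (T j) * T j = 1)
    (hΦ : Φ = ∑ j, (conjAd (T j)).comp (Φs j)) (hΦ1 : Φ 1 = 1) (j : Fin n) : Φs j 1 = 1 := by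
  refine eq_one_of_sum_star_mul_mul_eq hT (fun j ↦ (mem_CCPInvMaps_iff.1 (hΦs j)).2.1) ?_ j
  rw [hsum, ← hΦ1, hΦ]
  simp [conjAd_apply]

theorem IsCstarExtreme.map_one_eq_one {Φ : A →ₗ[ℂ] (H →L[ℂ] H)}
    (h : IsCstarExtreme CCPInvMaps Φ) : Φ 1 = 1 := by
  obtain ⟨hΦ, hext⟩ := h
  obtain ⟨hCP, hle, hunit⟩ := mem_CCPInvMaps_iff.1 hΦ
  have hP : IsStrictlyPositive (Φ 1) := hunit.isStrictlyPositive (by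
    simpa using isPosOp_iff_nonneg.1 (hCP.isPosOp_map_star_mul_self 1))
  set Ψ := (2⁻¹ : ℝ) • Φ
  have hΦΨ : Φ = Ψ + Ψ := by simp only [Ψ]; module
  have hΦΨ1 : Φ 1 = Ψ 1 + Ψ 1 := by rw [hΦΨ, LinearMap.add_apply]
  have hQ : IsStrictlyPositive (Ψ 1) := hP.smul (c := (2⁻¹ : ℝ)) (by norm_num)
  have hR : IsStrictlyPositive (1 - Ψ 1) := by
    have : 1 - Ψ 1 = (1 - Φ 1) + Ψ 1 := by rw [hΦΨ1]; abel
    exact this ▸ hQ.nonneg_add (sub_nonneg.2 hle)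
  obtain ⟨s, hs⟩ := exists_units_star_mul_self_eq hQ
  obtain ⟨r, hr⟩ := exists_units_star_mul_self_eq hR
  have hmem (u : (H →L[ℂ] H)ˣ) (hu : Ψ 1 ≤ star (u : H →L[ℂ] H) * u) :=
    conjAd_inv_comp_mem_CCPInvMaps (hCP.smul (by norm_num)) hQ.isUnit u hu
  have hr_ge : Ψ 1 ≤ star (r : H →L[ℂ] H) * r := by
    rw [hr, le_sub_iff_add_le, ← hΦΨ1]
    exact hle
  obtain ⟨U, hU, hΦU⟩ := hext 2 ![s, r]
    ![(conjAd (H := H) ↑s⁻¹).comp Ψ, (conjAd (H := H) ↑r⁻¹).comp Ψ]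
    (Fin.forall_fin_two.2 ⟨s.isUnit, r.isUnit⟩)
    (Fin.forall_fin_two.2 ⟨hmem s hs.ge, hmem r hr_ge⟩)
    (by simp [Fin.sum_univ_two, hs, hr])
    (by rw [Fin.sum_univ_two, hΦΨ]; simp [conjAd_units_comp_conjAd_inv_comp]) 0
  refine eq_one_of_conjAd_eq_one hU ?_
  rw [← LinearMap.comp_apply, ← hΦU]
  simpa [hs] using conjAd_units_inv_star_mul_self s

end CCPInv

theorem stmt15_general {A : Type*} [NormedRing A] [StarRing A] [NormedAlgebra ℂ A]
    {H : Type*} [NormedAddCommGroup H] [InnerProductSpace ℂ H] [CompleteSpace H] :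
    {Φ : A →ₗ[ℂ] (H →L[ℂ] H) |
        IsCstarExtreme
          {Ψ : A →ₗ[ℂ] (H →L[ℂ] H) | IsCPMap Ψ ∧ IsPosOp (1 - Ψ 1) ∧ IsUnit (Ψ 1)} Φ} =
      {Φ : A →ₗ[ℂ] (H →L[ℂ] H) |
        IsCstarExtreme (CPP (A := A) (1 : H →L[ℂ] H)) Φ} := by
  ext Φ
  constructor
  · intro h
    refine ⟨⟨h.1.1, IsCstarExtreme.map_one_eq_one h⟩, fun n T Φs hT hΦs hsum hΦ ↦ ?_⟩
    exact h.2 n T Φs hT (fun j ↦ CPP_one_subset_CCPInvMaps (hΦs j)) hsum hΦ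
  · rintro ⟨⟨hCP, hΦ1⟩, hext⟩
    refine ⟨CPP_one_subset_CCPInvMaps ⟨hCP, hΦ1⟩, fun n T Φs hT hΦs hsum hΦ ↦ ?_⟩
    have hΦs1 := map_one_eq_one_of_eq_sum_conjAd_comp hT hΦs hsum hΦ hΦ1
    exact hext n T Φs hT (fun j ↦ ⟨(hΦs j).1, hΦs1 j⟩) hsum hΦ

/-- Proposition `prop-CCP-prime=UCP-ext`. The `C*`-extreme points of
`CCP^×(A,B(H))` (contractive CP maps with invertible `Φ(1)`) are exactly the `C*`-extreme
points of `UCP(A,B(H))`. -/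
theorem stmt15 {A : Type*} [NormedRing A] [StarRing A] [CStarRing A] [NormedAlgebra ℂ A] [StarModule ℂ A] [CompleteSpace A]
    {H : Type*} [NormedAddCommGroup H] [InnerProductSpace ℂ H] [CompleteSpace H] :
    {Φ : A →ₗ[ℂ] (H →L[ℂ] H) |
        IsCstarExtreme
          {Ψ : A →ₗ[ℂ] (H →L[ℂ] H) | IsCPMap Ψ ∧ IsPosOp (1 - Ψ 1) ∧ IsUnit (Ψ 1)} Φ} =
      {Φ : A →ₗ[ℂ] (H →L[ℂ] H) |
        IsCstarExtreme (CPP (A := A) (1 : H →L[ℂ] H)) Φ} :=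
  stmt15_general
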